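/- Let E ⊂ ℝ^{n+1} be a closed n-dimensional ADR set, Q₀ ∈ 𝔻(E), and ℱ ⊂ 𝔻_{Q₀} a pairwise disjoint family of dyadic cubes. Let Ω_{ℱ,Q₀} be the associated local sawtooth region. Then Q₀ \ (∪_{Q_j∈ℱ} Q_j) ⊆ E ∩ ∂Ω_{ℱ,Q₀} ⊆ closure(Q₀) \ (∪_{Q_j∈ℱ} int(Q_j)). -/
import Mathlib


open MeasureTheory Metric Set
open scoped ENNReal
noncomputable section

abbrev Euc (n : ℕ) := EuclideanSpace ℝ (Fin (n + 1))

/-- Closed axis-parallel cube of center `c` and side length `l`. -/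
def Cb {n : ℕ} (c : Euc n) (l : ℝ) : Set (Euc n) := {y | ∀ i, |y i - c i| ≤ l / 2}

/-- Distance between two sets. -/
noncomputable def setDist {n : ℕ} (A B : Set (Euc n)) : ℝ :=
  (⨅ a ∈ A, EMetric.infEdist a B).toReal

/-- `E` is an `n`-dimensional Ahlfors–David regular (ADR) set with constant `C`. -/
def IsADR (n : ℕ) (C : ℝ) (E : Set (Euc n)) : Prop :=
  IsClosed E ∧ E.Nonempty ∧ 1 ≤ C ∧
    ∀ x ∈ E, ∀ r : ℝ, 0 < r → r < Metric.diam E →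
      ENNReal.ofReal (r ^ n / C) ≤ μH[(n : ℝ)] (E ∩ Metric.ball x r) ∧
        μH[(n : ℝ)] (E ∩ Metric.ball x r) ≤ ENNReal.ofReal (C * r ^ n)

/-- A Christ–David dyadic grid on `E`, with interior/exterior surface-ball constants
`a₀` and `C₁`. -/
structure DyadicGrid (n : ℕ) (E : Set (Euc n)) where
  idx : Type
  shape : idx → Set (Euc n)
  len : idx → ℝ
  center : idx → Euc n
  len_pos : ∀ Q, 0 < len Q
  len_dyadic : ∀ Q, ∃ k : ℤ, len Q = 2 ^ k
  shape_sub : ∀ Q, shape Q ⊆ E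
  center_mem : ∀ Q, center Q ∈ shape Q
  nested : ∀ Q Q', len Q ≤ len Q' → shape Q ⊆ shape Q' ∨ Disjoint (shape Q) (shape Q')
  disjt : ∀ Q Q', Q ≠ Q' → len Q = len Q' → Disjoint (shape Q) (shape Q')
  covers : ∀ k : ℤ, ∀ x ∈ E, ∃ Q, len Q = 2 ^ k ∧ x ∈ shape Q
  a₀ : ℝ
  a₀_pos : 0 < a₀
  C₁ : ℝ
  inner_ball : ∀ Q, E ∩ ball (center Q) (a₀ * len Q) ⊆ shape Q
  outer_ball : ∀ Q, shape Q ⊆ ball (center Q) (C₁ * len Q)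

/-- A Whitney decomposition of `ℝ^{n+1} \ E` into axis-parallel cubes satisfying
`4 diam I ≤ dist(4I, E) ≤ dist(I,E) ≤ 40 diam I`. -/
structure Whitney (n : ℕ) (E : Set (Euc n)) where
  idx : Type
  center : idx → Euc n
  len : idx → ℝ
  len_pos : ∀ I, 0 < len I
  covers : ∀ X : Euc n, X ∉ E → ∃ I, X ∈ Cb (center I) (len I)
  disjointInt : ∀ I J, I ≠ J →
    Disjoint (interior (Cb (center I) (len I))) (interior (Cb (center J) (len J)))
  far : ∀ I, 4 * Metric.diam (Cb (center I) (len I)) ≤ setDist (Cb (center I) (4 * len I)) E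
  near : ∀ I, setDist (Cb (center I) (len I)) E ≤ 40 * Metric.diam (Cb (center I) (len I))

variable {n : ℕ} {E : Set (Euc n)}

/-- The Whitney cubes associated to a dyadic cube `Q`:
`ℓ(Q)/2^{m₀} ≤ ℓ(I) ≤ 2^{m₀} ℓ(Q)` and `dist(I,Q) ≤ C₀ ℓ(Q)`. -/
def WQ (D : DyadicGrid n E) (W : Whitney n E) (m₀ : ℕ) (C₀ : ℝ) (Q : D.idx) : Set W.idx :=
  {I | D.len Q / 2 ^ m₀ ≤ W.len I ∧ W.len I ≤ 2 ^ m₀ * D.len Q ∧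
       setDist (Cb (W.center I) (W.len I)) (D.shape Q) ≤ C₀ * D.len Q}

/-- The (fattened) Whitney region `U_Q = ∪_{I ∈ 𝒲_Q} (1+τ) I`. -/
def UQ (D : DyadicGrid n E) (W : Whitney n E) (m₀ : ℕ) (C₀ τ : ℝ) (Q : D.idx) :
    Set (Euc n) :=
  ⋃ I ∈ WQ D W m₀ C₀ Q, Cb (W.center I) ((1 + τ) * W.len I)

/-- The Carleson box `T_Q = int (∪_{Q' ⊆ Q} U_{Q'})`. -/
def CarlesonBox (D : DyadicGrid n E) (W : Whitney n E) (m₀ : ℕ) (C₀ τ : ℝ) (Q : D.idx) :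
    Set (Euc n) :=
  interior (⋃ Q' ∈ {Q' | D.shape Q' ⊆ D.shape Q}, UQ D W m₀ C₀ τ Q')

/-- The discretized local sawtooth `𝔻_{ℱ,Q₀}`. -/
def DiscSawtooth (D : DyadicGrid n E) (F : Set D.idx) (Q₀ : D.idx) : Set D.idx :=
  {Q | D.shape Q ⊆ D.shape Q₀ ∧ ∀ Qj ∈ F, ¬ D.shape Q ⊆ D.shape Qj}

/-- The local sawtooth region `Ω_{ℱ,Q₀}`. -/
def Sawtooth (D : DyadicGrid n E) (W : Whitney n E) (m₀ : ℕ) (C₀ τ : ℝ)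
    (F : Set D.idx) (Q₀ : D.idx) : Set (Euc n) :=
  interior (⋃ Q ∈ DiscSawtooth D F Q₀, UQ D W m₀ C₀ τ Q)

/-- The global sawtooth region `Ω_ℱ`. -/
def GlobalSawtooth (D : DyadicGrid n E) (W : Whitney n E) (m₀ : ℕ) (C₀ τ : ℝ)
    (F : Set D.idx) : Set (Euc n) :=
  interior (⋃ Q ∈ {Q | ∀ Qj ∈ F, ¬ D.shape Q ⊆ D.shape Qj}, UQ D W m₀ C₀ τ Q)

/-- The interior of `A` relative to `E`. -/
def relInt {n : ℕ} (E A : Set (Euc n)) : Set (Euc n) :=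
  {y ∈ A | ∃ ε : ℝ, 0 < ε ∧ E ∩ ball y ε ⊆ A}

section Aux
variable {n : ℕ}

lemma coordDist (y z : Euc n) (i : Fin (n+1)) : |y i - z i| ≤ dist y z := by
  rw [EuclideanSpace.dist_eq, ← Real.dist_eq]
  have h1 : dist (y i) (z i) ^ 2 ≤ ∑ j, dist (y j) (z j) ^ 2 :=
    Finset.single_le_sum (f := fun j => dist (y j) (z j) ^ 2) (fun j _ => sq_nonneg _)
      (Finset.mem_univ i)
  calc dist (y i) (z i) = Real.sqrt (dist (y i) (z i) ^ 2) := (Real.sqrt_sq dist_nonneg).symm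
    _ ≤ _ := Real.sqrt_le_sqrt h1

lemma mem_Cb_self (c : Euc n) {l : ℝ} (hl : 0 ≤ l) : c ∈ Cb c l := by
  intro i; simp [div_nonneg hl]

lemma Cb_mono (c : Euc n) {l l' : ℝ} (h : l ≤ l') : Cb c l ⊆ Cb c l' :=
  fun y hy i => (hy i).trans (by linarith)

lemma dist_le_of_mem_Cb {c : Euc n} {l : ℝ} {y z : Euc n} (hl : 0 ≤ l)
    (hy : y ∈ Cb c l) (hz : z ∈ Cb c l) : dist y z ≤ (n+1) * l := by
  rw [EuclideanSpace.dist_eq]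
  have hb : ∀ j : Fin (n+1), dist (y j) (z j) ^ 2 ≤ l ^ 2 := by
    intro j
    have h1 := hy j; have h2 := hz j
    rw [Real.dist_eq]
    have : |y j - z j| ≤ l := by
      calc |y j - z j| ≤ |y j - c j| + |c j - z j| := abs_sub_le _ _ _
        _ ≤ l/2 + l/2 := by rw [abs_sub_comm (c j)]; exact add_le_add h1 h2
        _ = l := by ring
    nlinarith [abs_nonneg (y j - z j)]
  have hsum : ∑ j, dist (y j) (z j) ^ 2 ≤ ((n+1) * l) ^ 2 := by
    calc ∑ j, dist (y j) (z j) ^ 2 ≤ ∑ _j : Fin (n+1), l ^ 2 :=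
        Finset.sum_le_sum (fun j _ => hb j)
      _ = (n+1) * l ^ 2 := by simp [Finset.sum_const]
      _ ≤ ((n+1) * l) ^ 2 := by nlinarith [sq_nonneg l, Nat.cast_nonneg (α := ℝ) n]
  calc Real.sqrt (∑ j, dist (y j) (z j) ^ 2) ≤ Real.sqrt (((n+1)*l)^2) := Real.sqrt_le_sqrt hsum
    _ = (n+1) * l := Real.sqrt_sq (by positivity)

lemma isBounded_Cb (c : Euc n) {l : ℝ} (hl : 0 ≤ l) : Bornology.IsBounded (Cb c l) := by
  apply (Metric.isBounded_closedBall (x := c) (r := (n+1)*l)).subset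
  intro w hw
  exact Metric.mem_closedBall.2 (dist_le_of_mem_Cb hl hw (mem_Cb_self c hl))

lemma len_le_diam_Cb {c : Euc n} {l : ℝ} (hl : 0 ≤ l) : l ≤ Metric.diam (Cb c l) := by
  set u : Euc n := EuclideanSpace.single (0 : Fin (n+1)) (1:ℝ) with hu
  set y : Euc n := c + (l/2) • u with hyd
  set z : Euc n := c - (l/2) • u with hzd
  have happ : ∀ i, y i - c i = (l/2) * (if i = 0 then 1 else 0) ∧
      z i - c i = -((l/2) * (if i = 0 then 1 else 0)) := by
    intro i
    constructor <;>
      simp [hyd, hzd, hu, EuclideanSpace.single_apply, PiLp.add_apply, PiLp.sub_apply,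
        PiLp.smul_apply, smul_eq_mul]
  have hy : y ∈ Cb c l := by
    intro i
    rw [(happ i).1]
    rcases eq_or_ne i 0 with h | h <;> simp [h, abs_of_nonneg (by linarith : (0:ℝ) ≤ l/2)]
    positivity
  have hz : z ∈ Cb c l := by
    intro i
    rw [(happ i).2, abs_neg]
    rcases eq_or_ne i 0 with h | h <;> simp [h, abs_of_nonneg (by linarith : (0:ℝ) ≤ l/2)]
    positivity
  have hd := Metric.dist_le_diam_of_mem (isBounded_Cb c hl) hy hz
  have h0 : |y 0 - z 0| = l := by
    have h1 := (happ 0).1; have h2 := (happ 0).2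
    have : y 0 - z 0 = l := by
      have : (y 0 - c 0) - (z 0 - c 0) = l := by rw [h1, h2]; simp
      linarith
    rw [this, abs_of_nonneg hl]
  calc l = |y 0 - z 0| := h0.symm
    _ ≤ dist y z := coordDist _ _ _
    _ ≤ _ := hd

lemma setDist_le_dist {A B : Set (Euc n)} {a b : Euc n} (ha : a ∈ A) (hb : b ∈ B) :
    setDist A B ≤ dist a b := by
  have h1 : (⨅ a ∈ A, EMetric.infEdist a B) ≤ edist a b :=
    le_trans (iInf₂_le a ha) (EMetric.infEdist_le_edist_of_mem hb)
  calc (⨅ a ∈ A, EMetric.infEdist a B).toReal ≤ (edist a b).toReal :=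
      ENNReal.toReal_mono (edist_ne_top _ _) h1
    _ = dist a b := (dist_edist a b).symm

lemma exists_of_setDist_le {A B : Set (Euc n)} (hA : A.Nonempty) (hB : B.Nonempty)
    {r ε : ℝ} (h : setDist A B ≤ r) (hε : 0 < ε) :
    ∃ a ∈ A, ∃ b ∈ B, dist a b < r + ε := by
  obtain ⟨a₀, ha₀⟩ := hA; obtain ⟨b₀, hb₀⟩ := hB
  have hfin : (⨅ a ∈ A, EMetric.infEdist a B) ≠ ⊤ :=
    ne_top_of_le_ne_top (edist_ne_top a₀ b₀)
      (le_trans (iInf₂_le a₀ ha₀) (EMetric.infEdist_le_edist_of_mem hb₀))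
  have hr : 0 ≤ r := le_trans ENNReal.toReal_nonneg h
  have h2 : (⨅ a ∈ A, EMetric.infEdist a B) < ENNReal.ofReal (r + ε) := by
    calc (⨅ a ∈ A, EMetric.infEdist a B) ≤ ENNReal.ofReal r :=
        (ENNReal.le_ofReal_iff_toReal_le hfin hr).2 h
      _ < ENNReal.ofReal (r + ε) := by
        exact (ENNReal.ofReal_lt_ofReal_iff (by linarith)).2 (by linarith)
  simp only [iInf_lt_iff] at h2
  obtain ⟨a, ha, h3⟩ := h2
  obtain ⟨b, hb, h4⟩ := EMetric.infEdist_lt_iff.1 h3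
  exact ⟨a, ha, b, hb, edist_lt_ofReal.1 h4⟩


variable {E : Set (Euc n)}

lemma whitney_far_dist (W : Whitney n E) {τ : ℝ} (hτ0 : 0 < τ) (hτ : τ < 1/2) (I : W.idx)
    {x y : Euc n} (hx : x ∈ E) (hy : y ∈ Cb (W.center I) ((1+τ) * W.len I)) :
    4 * W.len I ≤ dist y x := by
  have hl := W.len_pos I
  have h4 : y ∈ Cb (W.center I) (4 * W.len I) := Cb_mono _ (by nlinarith) hy
  have h1 := setDist_le_dist h4 hx
  have h2 := W.far I
  have h3 := len_le_diam_Cb (c := W.center I) hl.le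
  linarith

lemma whitney_far_pt (W : Whitney n E) {τ : ℝ} (hτ0 : 0 < τ) (hτ : τ < 1/2) (I : W.idx)
    {x : Euc n} (hx : x ∈ E) (hmem : x ∈ Cb (W.center I) ((1+τ) * W.len I)) : False := by
  have h := whitney_far_dist W hτ0 hτ I hx hmem
  simp only [dist_self] at h
  have := W.len_pos I
  linarith

lemma key_dist (D : DyadicGrid n E) (W : Whitney n E) (m₀ : ℕ) {C₀ τ : ℝ} (hC₀ : 0 < C₀)
    (hτ0 : 0 < τ) (hτ : τ < 1/2) {Q : D.idx} {I : W.idx} (hI : I ∈ WQ D W m₀ C₀ Q)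
    {y : Euc n} (hy : y ∈ Cb (W.center I) ((1+τ) * W.len I)) :
    ∃ q ∈ D.shape Q, dist y q ≤ (2*(n+1)*2^m₀ + C₀ + 1) * D.len Q := by
  obtain ⟨h1, h2, h3⟩ := hI
  have hlI := W.len_pos I
  have hlQ := D.len_pos Q
  have hpm : (0:ℝ) < 2 ^ m₀ := by positivity
  have hne : (Cb (W.center I) (W.len I)).Nonempty := ⟨_, mem_Cb_self _ hlI.le⟩
  have hne2 : (D.shape Q).Nonempty := ⟨_, D.center_mem Q⟩
  obtain ⟨a, ha, q, hq, hd⟩ := exists_of_setDist_le hne hne2 h3 hlQ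
  refine ⟨q, hq, ?_⟩
  have ha' : a ∈ Cb (W.center I) ((1+τ) * W.len I) := Cb_mono _ (by nlinarith) ha
  have hya : dist y a ≤ (n+1) * ((1+τ) * W.len I) :=
    dist_le_of_mem_Cb (by positivity) hy ha'
  have hcast : (0:ℝ) ≤ (n:ℝ) + 1 := by positivity
  have hstep : (n+1) * ((1+τ) * W.len I) ≤ (n+1) * (2 * (2^m₀ * D.len Q)) := by
    apply mul_le_mul_of_nonneg_left _ hcast
    nlinarith
  have htri := dist_triangle y a q
  nlinarith

lemma lenQ_le (D : DyadicGrid n E) (W : Whitney n E) (m₀ : ℕ) {C₀ τ : ℝ}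
    (hτ0 : 0 < τ) (hτ : τ < 1/2) {Q : D.idx} {I : W.idx} (hI : I ∈ WQ D W m₀ C₀ Q)
    {x y : Euc n} (hx : x ∈ E) (hy : y ∈ Cb (W.center I) ((1+τ) * W.len I)) :
    D.len Q ≤ 2^m₀ * dist y x := by
  have h := whitney_far_dist W hτ0 hτ I hx hy
  have h1 := hI.1
  have hpm : (0:ℝ) < 2 ^ m₀ := by positivity
  rw [div_le_iff₀ hpm] at h1
  have hd : (0:ℝ) ≤ dist y x := dist_nonneg
  nlinarith

lemma sawtooth_unpack {D : DyadicGrid n E} {W : Whitney n E} {m₀ : ℕ} {C₀ τ : ℝ}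
    {F : Set D.idx} {Q₀ : D.idx} {y : Euc n} (hy : y ∈ Sawtooth D W m₀ C₀ τ F Q₀) :
    ∃ Q ∈ DiscSawtooth D F Q₀, ∃ I ∈ WQ D W m₀ C₀ Q,
      y ∈ Cb (W.center I) ((1+τ) * W.len I) := by
  have h := interior_subset hy
  simp only [mem_iUnion] at h
  obtain ⟨Q, hQ, h2⟩ := h
  simp only [UQ, mem_iUnion] at h2
  obtain ⟨I, hI, h3⟩ := h2
  exact ⟨Q, hQ, I, hI, h3⟩

lemma center_mem_sawtooth {D : DyadicGrid n E} {W : Whitney n E} {m₀ : ℕ} {C₀ τ : ℝ}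
    (hτ0 : 0 < τ) {F : Set D.idx} {Q₀ : D.idx} {Q : D.idx} (hQ : Q ∈ DiscSawtooth D F Q₀)
    {I : W.idx} (hI : I ∈ WQ D W m₀ C₀ Q) :
    W.center I ∈ Sawtooth D W m₀ C₀ τ F Q₀ := by
  have hl := W.len_pos I
  have hr : 0 < (1+τ) * W.len I / 2 := by positivity
  have hball : ball (W.center I) ((1+τ) * W.len I / 2) ⊆
      ⋃ Q' ∈ DiscSawtooth D F Q₀, UQ D W m₀ C₀ τ Q' := by
    intro z hz
    have hz' : z ∈ Cb (W.center I) ((1+τ) * W.len I) := by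
      intro i
      have h1 := coordDist z (W.center I) i
      have h2 := mem_ball.1 hz
      linarith
    refine mem_iUnion₂.2 ⟨Q, hQ, ?_⟩
    exact mem_iUnion₂.2 ⟨I, hI, hz'⟩
  exact interior_maximal hball isOpen_ball (mem_ball_self hr)

lemma approx_lemma {D : DyadicGrid n E} {W : Whitney n E} {m₀ : ℕ} {C₀ τ : ℝ}
    (hC₀ : 0 < C₀) (hτ0 : 0 < τ) (hτ : τ < 1/2) {F : Set D.idx} {Q₀ : D.idx}
    {x : Euc n} (hx : x ∈ E) (hcl : x ∈ closure (Sawtooth D W m₀ C₀ τ F Q₀))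
    {δ : ℝ} (hδ : 0 < δ) :
    ∃ Q ∈ DiscSawtooth D F Q₀, D.len Q ≤ 2^m₀ * δ ∧
      ∃ q ∈ D.shape Q, dist x q < (1 + (2*(n+1)*2^m₀ + C₀ + 1) * 2^m₀) * δ := by
  obtain ⟨y, hyS, hyd⟩ := Metric.mem_closure_iff.1 hcl δ hδ
  obtain ⟨Q, hQ, I, hI, hyC⟩ := sawtooth_unpack hyS
  have hpm : (0:ℝ) < 2 ^ m₀ := by positivity
  have h1 : D.len Q ≤ 2^m₀ * dist y x := lenQ_le D W m₀ hτ0 hτ hI hx hyC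
  rw [dist_comm] at hyd
  have h1' : D.len Q ≤ 2^m₀ * δ := by nlinarith
  obtain ⟨q, hq, hdq⟩ := key_dist D W m₀ hC₀ hτ0 hτ hI hyC
  refine ⟨Q, hQ, h1', q, hq, ?_⟩
  have htri := dist_triangle x y q
  have hK : (0:ℝ) < 2*(n+1)*2^m₀ + C₀ + 1 := by positivity
  rw [dist_comm y x] at hyd
  nlinarith


end Aux

/-- Containments for the boundary of the local sawtooth:
`Q₀ \ (∪_ℱ Q_j) ⊆ E ∩ ∂Ω_{ℱ,Q₀} ⊆ closure Q₀ \ (∪_ℱ int(Q_j))`, where `int(Q_j)` is the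
interior of `Q_j` relative to `E`. -/
theorem statement12 (n : ℕ) (CA : ℝ) (m₀ : ℕ) (C₀ τ : ℝ)
    (hC₀ : 0 < C₀) (hτ : 0 < τ) (hτ' : τ < 1 / 2) :
    ∀ (E : Set (Euc n)), IsADR n CA E →
      ∀ (D : DyadicGrid n E) (W : Whitney n E),
        (∀ Q : D.idx, (WQ D W m₀ C₀ Q).Nonempty) →
        ∀ (Q₀ : D.idx) (F : Set D.idx),
          (∀ Qj ∈ F, D.shape Qj ⊆ D.shape Q₀) →
          (∀ Qi ∈ F, ∀ Qj ∈ F, Qi ≠ Qj → Disjoint (D.shape Qi) (D.shape Qj)) →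
          D.shape Q₀ \ (⋃ Qj ∈ F, D.shape Qj) ⊆
              E ∩ frontier (Sawtooth D W m₀ C₀ τ F Q₀) ∧
            E ∩ frontier (Sawtooth D W m₀ C₀ τ F Q₀) ⊆
              closure (D.shape Q₀) \ (⋃ Qj ∈ F, relInt E (D.shape Qj)) := by
  intro E _hADR D W hW Q₀ F hF _hdisj
  have hopen : IsOpen (Sawtooth D W m₀ C₀ τ F Q₀) := by
    unfold Sawtooth; exact isOpen_interior
  have hxnot : ∀ x ∈ E, x ∉ Sawtooth D W m₀ C₀ τ F Q₀ := by
    intro x hxE hxΩ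
    obtain ⟨Q, hQ, I, hI, hC⟩ := sawtooth_unpack hxΩ
    exact whitney_far_pt W hτ hτ' I hxE hC
  have hC₁pos : 0 < D.C₁ := by
    have h := mem_ball.1 (D.outer_ball Q₀ (D.center_mem Q₀))
    rw [dist_self] at h
    have := D.len_pos Q₀
    nlinarith
  constructor
  · intro x hx
    have hxE : x ∈ E := D.shape_sub Q₀ hx.1
    refine ⟨hxE, ?_⟩
    rw [hopen.frontier_eq]
    refine ⟨?_, hxnot x hxE⟩
    rw [Metric.mem_closure_iff]
    intro ε hε
    set K : ℝ := 2*(↑n+1)*(2:ℝ)^m₀ + C₀ + 1 with hK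
    set M : ℝ := K + 2*D.C₁ with hM
    have hKpos : 0 < K := by rw [hK]; positivity
    have hMpos : 0 < M := by rw [hM]; positivity
    have hmin : 0 < min (ε/M) (D.len Q₀) := lt_min (div_pos hε hMpos) (D.len_pos Q₀)
    obtain ⟨m, hm⟩ := exists_pow_lt_of_lt_one hmin (by norm_num : (1/2:ℝ) < 1)
    have h2k : (2:ℝ)^(-(m:ℤ)) < min (ε/M) (D.len Q₀) := by
      rw [zpow_neg, zpow_natCast]
      calc ((2:ℝ)^m)⁻¹ = (1/2)^m := by rw [one_div, inv_pow]
        _ < _ := hm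
    obtain ⟨Q, hQl, hxQ⟩ := D.covers (-(m:ℤ)) x hxE
    have hlQ : D.len Q < min (ε/M) (D.len Q₀) := by rw [hQl]; exact h2k
    have hlen : D.len Q ≤ D.len Q₀ := le_of_lt (lt_of_lt_of_le hlQ (min_le_right _ _))
    have hsub : D.shape Q ⊆ D.shape Q₀ := by
      rcases D.nested Q Q₀ hlen with h | h
      · exact h
      · exact absurd hx.1 (Set.disjoint_left.1 h hxQ)
    have hQD : Q ∈ DiscSawtooth D F Q₀ :=
      ⟨hsub, fun Qj hQj hsubj => hx.2 (mem_iUnion₂.2 ⟨Qj, hQj, hsubj hxQ⟩)⟩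
    obtain ⟨I, hI⟩ := hW Q
    refine ⟨W.center I, center_mem_sawtooth hτ hQD hI, ?_⟩
    have hlIpos := W.len_pos I
    obtain ⟨q, hq, hdq⟩ :=
      key_dist D W m₀ hC₀ hτ hτ' hI (mem_Cb_self (W.center I) (by positivity))
    have hb1 : dist q (D.center Q) < D.C₁ * D.len Q := mem_ball.1 (D.outer_ball Q hq)
    have hb2 : dist x (D.center Q) < D.C₁ * D.len Q := mem_ball.1 (D.outer_ball Q hxQ)
    have htri : dist x (W.center I) ≤
        dist x (D.center Q) + dist (D.center Q) q + dist q (W.center I) :=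
      dist_triangle4 x (D.center Q) q (W.center I)
    rw [dist_comm (D.center Q) q] at htri
    rw [dist_comm q (W.center I)] at htri
    have hKq : dist (W.center I) q ≤ K * D.len Q := hdq
    have hQε : D.len Q < ε / M := lt_of_lt_of_le hlQ (min_le_left _ _)
    have hfin : M * D.len Q < ε := by
      calc M * D.len Q < M * (ε/M) := mul_lt_mul_of_pos_left hQε hMpos
        _ = ε := by field_simp
    have hexp : M * D.len Q = K * D.len Q + 2 * D.C₁ * D.len Q := by rw [hM]; ring
    linarith
  · rintro x ⟨hxE, hxfr⟩
    have hxcl : x ∈ closure (Sawtooth D W m₀ C₀ τ F Q₀) := frontier_subset_closure hxfr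
    set K2 : ℝ := 1 + (2*(↑n+1)*(2:ℝ)^m₀ + C₀ + 1) * 2^m₀ with hK2
    have hK2pos : 0 < K2 := by rw [hK2]; positivity
    constructor
    · rw [Metric.mem_closure_iff]
      intro ε hε
      have hδ : 0 < ε / K2 := by positivity
      obtain ⟨Q, hQ, hlen, q, hq, hdq⟩ := approx_lemma hC₀ hτ hτ' hxE hxcl hδ
      refine ⟨q, hQ.1 hq, ?_⟩
      calc dist x q < K2 * (ε/K2) := hdq
        _ = ε := by field_simp
    · intro hmem
      simp only [mem_iUnion] at hmem
      obtain ⟨Qj, hQj, hxQj, ε, hε, hsubE⟩ := hmem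
      have hpm : (0:ℝ) < (2:ℝ)^m₀ := by positivity
      have hljpos := D.len_pos Qj
      set δ : ℝ := min (ε / K2) (D.len Qj / 2^m₀ / 2) with hδdef
      have hδ : 0 < δ := lt_min (by positivity) (by positivity)
      obtain ⟨Q, hQ, hlen, q, hq, hdq⟩ := approx_lemma hC₀ hτ hτ' hxE hxcl hδ
      have hql : D.len Q ≤ D.len Qj := by
        have h1 : δ ≤ D.len Qj / 2^m₀ / 2 := min_le_right _ _
        have h2 : (2:ℝ)^m₀ * δ ≤ 2^m₀ * (D.len Qj / 2^m₀ / 2) :=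
          mul_le_mul_of_nonneg_left h1 hpm.le
        have h3 : (2:ℝ)^m₀ * (D.len Qj / 2^m₀ / 2) = D.len Qj / 2 := by field_simp
        linarith
      have hdist : dist x q < ε := by
        have h1 : δ ≤ ε / K2 := min_le_left _ _
        have h2 : K2 * δ ≤ K2 * (ε/K2) := mul_le_mul_of_nonneg_left h1 hK2pos.le
        have h3 : K2 * (ε/K2) = ε := by field_simp
        have hdq' : dist x q < K2 * δ := hdq
        linarith
      have hqQj : q ∈ D.shape Qj :=
        hsubE ⟨D.shape_sub Q hq, mem_ball.2 (by rw [dist_comm]; exact hdist)⟩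
      rcases D.nested Q Qj hql with h | h
      · exact hQ.2 Qj hQj h
      · exact Set.disjoint_left.1 h hq hqQj
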